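/- Let G(x) be a q×q symmetric matrix with entries in ℝ[x_1,...,x_n], K = {x ∈ ℝ^n : G(x) ⪰ 0}, and let H(G) ⊆ ℝ[x_1,...,x_n] be the set of all polynomials of the form λ_0 + Σ_{k=1}^m ⟨Λ_k, G(x)^{⊗k}⟩ where m ∈ ℕ, λ_0 ≥ 0 is a real number, and each Λ_k is a q^k × q^k positive semidefinite real matrix. Let π(H(G)) be the convex set of linear functionals L : ℝ[x_1,...,x_n] → ℝ with L(1) = 1 and L(f) ≥ 0 for all f ∈ H(G). Suppose ℝ[x_1,...,x_n] = H(G) − H(G) and the constant polynomial 1 lies in the algebraic interior of H(G). Then for every extreme point L of π(H(G)) there exists a point u ∈ K such that L(f) = f(u) for all f ∈ ℝ[x_1,...,x_n]. -/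

import Mathlib

/-!
Since `1` is an algebraic interior point of `H(G)`, for every `a` there is `t > 0` with
`1 ± t a ∈ H(G)`. The cone `H(G)` is closed under products, because Kronecker products of
positive semidefinite matrices are positive semidefinite and `G^{⊗k} ⊗ G^{⊗l} = G^{⊗(k+l)}`.
Hence for an extreme point `L` of `π(H(G))` the functionals `f ↦ L((1 ± t a) f) / 2` are
nonnegative on `H(G)` and sum to `L`, so they are proportional to `L`: this says
`L(a f) = L(a) L(f)`. A unital multiplicative functional on `ℝ[x]` is evaluation at
`u = (L(x_i))_i`, and `u ∈ K` because `vᵀ G(u) v` is the value at `u` of `⟨v vᵀ, G⟩ ∈ H(G)`.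
-/

open scoped BigOperators

noncomputable section

/-- The `k`-fold Kronecker power of a matrix, with rows and columns indexed by
functions `Fin k → ι` (a type of cardinality `(#ι)^k`):
`(M^{⊗k})_{a,b} = ∏ᵢ M_{a i, b i}`. -/
def kronPow {ι : Type*} {R : Type*} [CommMonoid R] (M : Matrix ι ι R) (k : ℕ) :
    Matrix (Fin k → ι) (Fin k → ι) R :=
  Matrix.of fun a b => ∏ i, M (a i) (b i)

/-- Trace inner product `⟨Λ, B⟩ = tr(Λᵀ B) = ∑ᵢⱼ Λᵢⱼ Bᵢⱼ` of a real matrix against a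
polynomial matrix. -/
def tipP {n : ℕ} {ι : Type*} [Fintype ι] (Λ : Matrix ι ι ℝ)
    (B : Matrix ι ι (MvPolynomial (Fin n) ℝ)) : MvPolynomial (Fin n) ℝ :=
  ∑ i, ∑ j, MvPolynomial.C (Λ i j) * B i j

/-- The cone `H(G)` of all polynomials of the form
`λ₀ + ∑_{k=1}^m ⟨Λ_k, G(x)^{⊗k}⟩` with `λ₀ ≥ 0` and each `Λ_k` positive semidefinite. -/
def Hset {n : ℕ} {ι : Type*} [Fintype ι]
    (G : Matrix ι ι (MvPolynomial (Fin n) ℝ)) : Set (MvPolynomial (Fin n) ℝ) :=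
  { p | ∃ (m : ℕ) (lam0 : ℝ) (Λ : (k : ℕ) → Matrix (Fin k → ι) (Fin k → ι) ℝ),
      0 ≤ lam0 ∧ (∀ k ∈ Finset.Icc 1 m, (Λ k).PosSemidef) ∧
      p = MvPolynomial.C lam0 + ∑ k ∈ Finset.Icc 1 m, tipP (Λ k) (kronPow G k) }

/-- Entrywise evaluation of a polynomial matrix at a point `x`. -/
def evalMat {n : ℕ} {ι : Type*} (x : Fin n → ℝ)
    (B : Matrix ι ι (MvPolynomial (Fin n) ℝ)) : Matrix ι ι ℝ :=
  Matrix.of fun i j => MvPolynomial.eval x (B i j)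

section AlgebraicInterior

variable {V : Type*} [AddCommGroup V] [Module ℝ V]

def IsAlgebraicInteriorPoint (C : Set V) (x : V) : Prop :=
  ∀ f : V, ∃ ε > 0, ∀ t : ℝ, |t| < ε → x + t • f ∈ C

/-- The set `π(C)` of the paper, with unit `e`. -/
def states (C : Set V) (e : V) : Set (V →ₗ[ℝ] ℝ) :=
  {L | L e = 1 ∧ ∀ f ∈ C, 0 ≤ L f}

variable {C : Set V} {x e : V}

namespace IsAlgebraicInteriorPoint

lemma exists_add_smul_mem_and_sub_smul_mem (hx : IsAlgebraicInteriorPoint C x) (f : V) :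
    ∃ t : ℝ, 0 < t ∧ x + t • f ∈ C ∧ x - t • f ∈ C := by
  obtain ⟨ε, hε, h⟩ := hx f
  have ht : |ε / 2| < ε := by rw [abs_of_pos (by positivity)]; linarith
  refine ⟨ε / 2, by positivity, h _ ht, ?_⟩
  simpa [sub_eq_add_neg] using h (-(ε / 2)) (by rwa [abs_neg])

lemma mem (hx : IsAlgebraicInteriorPoint C x) : x ∈ C := by
  obtain ⟨t, -, h, -⟩ := hx.exists_add_smul_mem_and_sub_smul_mem 0
  simpa using h

lemma eq_zero_of_nonneg (hx : IsAlgebraicInteriorPoint C x) {M : V →ₗ[ℝ] ℝ}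
    (hM : ∀ f ∈ C, 0 ≤ M f) (hMx : M x = 0) : M = 0 := by
  ext f
  obtain ⟨t, ht, hplus, hminus⟩ := hx.exists_add_smul_mem_and_sub_smul_mem f
  have h₁ := hM _ hplus
  have h₂ := hM _ hminus
  simp only [map_add, map_sub, map_smul, hMx, smul_eq_mul, zero_add, zero_sub] at h₁ h₂
  simpa [ht.ne'] using le_antisymm (neg_nonneg.mp h₂) h₁

end IsAlgebraicInteriorPoint

lemma inv_smul_mem_states {M : V →ₗ[ℝ] ℝ} (hM : ∀ f ∈ C, 0 ≤ M f) (he : 0 < M e) :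
    (M e)⁻¹ • M ∈ states C e :=
  ⟨by simp [he.ne'], fun f hf => by simpa using mul_nonneg (inv_nonneg.2 he.le) (hM f hf)⟩

lemma eq_smul_of_add_eq_of_mem_extremePoints {L M N : V →ₗ[ℝ] ℝ}
    (hL : L ∈ Set.extremePoints ℝ (states C e)) (he : IsAlgebraicInteriorPoint C e)
    (hM : ∀ f ∈ C, 0 ≤ M f) (hN : ∀ f ∈ C, 0 ≤ N f) (hMN : M + N = L) : M = M e • L := by
  rcases (hM e he.mem).eq_or_lt with hM0 | hMpos
  · rw [he.eq_zero_of_nonneg hM hM0.symm, LinearMap.zero_apply, zero_smul]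
  rcases (hN e he.mem).eq_or_lt with hN0 | hNpos
  · rw [he.eq_zero_of_nonneg hN hN0.symm, add_zero] at hMN
    rw [hMN, hL.1.1, one_smul]
  have hseg : L ∈ openSegment ℝ ((M e)⁻¹ • M) ((N e)⁻¹ • N) :=
    ⟨M e, N e, hMpos, hNpos, by rw [← LinearMap.add_apply, hMN, hL.1.1], by
      simp [smul_smul, hMpos.ne', hNpos.ne', hMN]⟩
  rw [← hL.2 (inv_smul_mem_states hM hMpos) (inv_smul_mem_states hN hNpos) hseg, smul_smul,
    mul_inv_cancel₀ hMpos.ne', one_smul]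

end AlgebraicInterior

section Multiplicative

variable {A : Type*} [Ring A] [Algebra ℝ A] {C : Set A}

lemma map_mul_of_mem_extremePoints_states (h1 : IsAlgebraicInteriorPoint C 1)
    (hC : ∀ a ∈ C, ∀ b ∈ C, a * b ∈ C) {L : A →ₗ[ℝ] ℝ}
    (hL : L ∈ Set.extremePoints ℝ (states C 1)) (a b : A) : L (a * b) = L a * L b := by
  obtain ⟨t, ht, hplus, hminus⟩ := h1.exists_add_smul_mem_and_sub_smul_mem a
  let half (g : A) : A →ₗ[ℝ] ℝ := (2⁻¹ : ℝ) • L ∘ₗ LinearMap.mulLeft ℝ g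
  have half_nonneg {g : A} (hg : g ∈ C) (f : A) (hf : f ∈ C) : 0 ≤ half g f :=
    mul_nonneg (by norm_num) (hL.1.2 _ (hC _ hg _ hf))
  have hsum : half (1 + t • a) + half (1 - t • a) = L := by
    ext f
    simp only [half, LinearMap.add_apply, LinearMap.smul_apply, LinearMap.comp_apply,
      LinearMap.mulLeft_apply, add_mul, sub_mul, one_mul, map_add, map_sub, smul_eq_mul]
    ring
  have key := LinearMap.congr_fun (eq_smul_of_add_eq_of_mem_extremePoints hL h1
    (half_nonneg hplus) (half_nonneg hminus) hsum) b
  simp only [half, LinearMap.smul_apply, LinearMap.comp_apply, LinearMap.mulLeft_apply,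
    add_mul, one_mul, mul_one, map_add, hL.1.1, smul_mul_assoc, map_smul, smul_eq_mul] at key
  exact mul_left_cancel₀ ht.ne' (by linarith)

end Multiplicative

lemma MvPolynomial.eq_eval_of_map_mul {σ : Type*} (L : MvPolynomial σ ℝ →ₗ[ℝ] ℝ) (h1 : L 1 = 1)
    (hmul : ∀ a b, L (a * b) = L a * L b) (f : MvPolynomial σ ℝ) :
    L f = eval (fun i => L (X i)) f := by
  rw [← coe_aeval_eq_eval]
  exact DFunLike.congr_fun (aeval_unique (AlgHom.ofLinearMap L h1 hmul)) f

section KronPow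

open Matrix
open scoped Kronecker

variable {n : ℕ} {ι κ : Type*}

lemma kronPow_one {R : Type*} [CommMonoid R] (M : Matrix ι ι R) :
    kronPow M 1 = M.submatrix (Equiv.funUnique (Fin 1) ι) (Equiv.funUnique (Fin 1) ι) := by
  ext a b
  simp [kronPow]

lemma kronPow_add {R : Type*} [CommMonoid R] (M : Matrix ι ι R) (k l : ℕ) :
    kronPow M (k + l) =
      (kronPow M k ⊗ₖ kronPow M l).submatrix (Fin.appendEquiv k l).symm
        (Fin.appendEquiv k l).symm := by
  ext a b
  simp [kronPow, Fin.prod_univ_add]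

variable [Fintype ι] [Fintype κ]

lemma tipP_zero (B : Matrix ι ι (MvPolynomial (Fin n) ℝ)) : tipP 0 B = 0 := by
  simp [tipP]

lemma tipP_add (Λ Λ' : Matrix ι ι ℝ) (B : Matrix ι ι (MvPolynomial (Fin n) ℝ)) :
    tipP (Λ + Λ') B = tipP Λ B + tipP Λ' B := by
  simp [tipP, add_mul, Finset.sum_add_distrib]

lemma tipP_submatrix_equiv (Λ : Matrix ι ι ℝ) (B : Matrix ι ι (MvPolynomial (Fin n) ℝ))
    (e : κ ≃ ι) : tipP (Λ.submatrix e e) (B.submatrix e e) = tipP Λ B := by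
  simp only [tipP, submatrix_apply]
  rw [e.sum_comp (fun i => ∑ j, MvPolynomial.C (Λ i (e j)) * B i (e j))]
  exact Finset.sum_congr rfl fun i _ => e.sum_comp (fun j => MvPolynomial.C (Λ i j) * B i j)

lemma tipP_kronecker (Λ : Matrix ι ι ℝ) (Λ' : Matrix κ κ ℝ)
    (B : Matrix ι ι (MvPolynomial (Fin n) ℝ)) (B' : Matrix κ κ (MvPolynomial (Fin n) ℝ)) :
    tipP (Λ ⊗ₖ Λ') (B ⊗ₖ B') = tipP Λ B * tipP Λ' B' := by
  simp only [tipP, kronecker_apply, Fintype.sum_prod_type, Finset.sum_mul_sum, map_mul]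
  refine Finset.sum_congr rfl fun i _ => Finset.sum_congr rfl fun k _ => ?_
  exact Finset.sum_congr rfl fun j _ => Finset.sum_congr rfl fun l _ => by ring

lemma tipP_kronPow_zero (Λ : Matrix (Fin 0 → ι) (Fin 0 → ι) ℝ)
    (B : Matrix ι ι (MvPolynomial (Fin n) ℝ)) :
    tipP Λ (kronPow B 0) = MvPolynomial.C (∑ i, ∑ j, Λ i j) := by
  simp [tipP, kronPow]

end KronPow

section Cone

open Matrix

variable {n : ℕ} {ι : Type*} [Fintype ι] (G : Matrix ι ι (MvPolynomial (Fin n) ℝ))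

/-- Generators of `H(G)`; with `k = 0` they include the constants `λ₀ ≥ 0`. -/
def kronTerms : Set (MvPolynomial (Fin n) ℝ) :=
  {p | ∃ (k : ℕ) (Λ : Matrix (Fin k → ι) (Fin k → ι) ℝ), Λ.PosSemidef ∧ p = tipP Λ (kronPow G k)}

lemma mul_mem_kronTerms {p r : MvPolynomial (Fin n) ℝ} (hp : p ∈ kronTerms G)
    (hr : r ∈ kronTerms G) : p * r ∈ kronTerms G := by
  obtain ⟨k, Λ, hΛ, rfl⟩ := hp
  obtain ⟨l, Λ', hΛ', rfl⟩ := hr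
  refine ⟨k + l, _, (hΛ.kronecker hΛ').submatrix (Fin.appendEquiv k l).symm, ?_⟩
  rw [kronPow_add, tipP_submatrix_equiv, tipP_kronecker]

lemma tipP_kronPow_mem_Hset {k : ℕ} {Λ : Matrix (Fin k → ι) (Fin k → ι) ℝ}
    (hΛ : Λ.PosSemidef) : tipP Λ (kronPow G k) ∈ Hset G := by
  rcases Nat.eq_zero_or_pos k with rfl | hk
  · refine ⟨0, ∑ i, ∑ j, Λ i j, 0, ?_, by simp, by simp [tipP_kronPow_zero]⟩
    simpa [dotProduct, mulVec] using hΛ.dotProduct_mulVec_nonneg 1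
  · refine ⟨k, 0, Pi.single k Λ, le_rfl, fun j _ => ?_, ?_⟩
    · rcases eq_or_ne j k with rfl | hjk
      · simpa using hΛ
      · simpa [Pi.single_eq_of_ne hjk] using PosSemidef.zero
    · rw [map_zero, zero_add, Finset.sum_eq_single_of_mem k (Finset.mem_Icc.2 ⟨hk, le_rfl⟩)]
      · simp
      · intro j _ hjk
        rw [Pi.single_eq_of_ne hjk, tipP_zero]

lemma exists_posSemidef_sum_eq_of_le {m M : ℕ} (hmM : m ≤ M)
    {Λ : (k : ℕ) → Matrix (Fin k → ι) (Fin k → ι) ℝ}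
    (hΛ : ∀ k ∈ Finset.Icc 1 m, (Λ k).PosSemidef) :
    ∃ Λ' : (k : ℕ) → Matrix (Fin k → ι) (Fin k → ι) ℝ,
      (∀ k ∈ Finset.Icc 1 M, (Λ' k).PosSemidef) ∧
      ∑ k ∈ Finset.Icc 1 m, tipP (Λ k) (kronPow G k) =
        ∑ k ∈ Finset.Icc 1 M, tipP (Λ' k) (kronPow G k) := by
  refine ⟨fun k => if k ∈ Finset.Icc 1 m then Λ k else 0, fun k _ => ?_, ?_⟩
  · dsimp only
    split_ifs with hk
    exacts [hΛ k hk, PosSemidef.zero]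
  · rw [← Finset.sum_subset (Finset.Icc_subset_Icc_right hmM) fun k _ hk => by
      simp only [if_neg hk, tipP_zero]]
    exact Finset.sum_congr rfl fun k hk => by simp only [if_pos hk]

lemma zero_mem_Hset : (0 : MvPolynomial (Fin n) ℝ) ∈ Hset G :=
  ⟨0, 0, 0, le_rfl, by simp, by simp⟩

lemma add_mem_Hset {p r : MvPolynomial (Fin n) ℝ} (hp : p ∈ Hset G) (hr : r ∈ Hset G) :
    p + r ∈ Hset G := by
  obtain ⟨m₁, a₁, Λ₁, ha₁, hΛ₁, rfl⟩ := hp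
  obtain ⟨m₂, a₂, Λ₂, ha₂, hΛ₂, rfl⟩ := hr
  obtain ⟨Λ₁', hΛ₁', h₁⟩ := exists_posSemidef_sum_eq_of_le G (le_max_left m₁ m₂) hΛ₁
  obtain ⟨Λ₂', hΛ₂', h₂⟩ := exists_posSemidef_sum_eq_of_le G (le_max_right m₁ m₂) hΛ₂
  refine ⟨max m₁ m₂, a₁ + a₂, Λ₁' + Λ₂', add_nonneg ha₁ ha₂,
    fun k hk => (hΛ₁' k hk).add (hΛ₂' k hk), ?_⟩
  simp only [h₁, h₂, Pi.add_apply, tipP_add, Finset.sum_add_distrib, map_add]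
  ring

def hCone : AddSubmonoid (MvPolynomial (Fin n) ℝ) where
  carrier := Hset G
  add_mem' := add_mem_Hset G
  zero_mem' := zero_mem_Hset G

lemma hCone_eq_closure_kronTerms : hCone G = AddSubmonoid.closure (kronTerms G) := by
  classical
  refine le_antisymm ?_ (AddSubmonoid.closure_le.2 ?_)
  · rintro _ ⟨m, a, Λ, ha, hΛ, rfl⟩
    have hC : MvPolynomial.C a ∈ kronTerms G :=
      ⟨0, diagonal fun _ => a, PosSemidef.diagonal fun _ => ha, by simp [tipP_kronPow_zero]⟩
    exact add_mem (AddSubmonoid.subset_closure hC)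
      (sum_mem fun k hk => AddSubmonoid.subset_closure ⟨k, Λ k, hΛ k hk, rfl⟩)
  · rintro _ ⟨k, Λ, hΛ, rfl⟩
    exact tipP_kronPow_mem_Hset G hΛ

open scoped Pointwise in
lemma mul_mem_Hset {p r : MvPolynomial (Fin n) ℝ} (hp : p ∈ Hset G) (hr : r ∈ Hset G) :
    p * r ∈ Hset G := by
  change p ∈ hCone G at hp
  change r ∈ hCone G at hr
  rw [hCone_eq_closure_kronTerms] at hp hr
  have hpr := AddSubmonoid.mul_mem_mul hp hr
  rw [AddSubmonoid.closure_mul_closure] at hpr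
  refine (hCone_eq_closure_kronTerms G).ge (AddSubmonoid.closure_mono ?_ hpr)
  exact Set.mul_subset_iff.2 fun _ ha _ hb => mul_mem_kronTerms G ha hb

lemma tipP_mem_Hset {Λ : Matrix ι ι ℝ} (hΛ : Λ.PosSemidef) : tipP Λ G ∈ Hset G := by
  have h := tipP_kronPow_mem_Hset G (hΛ.submatrix (Equiv.funUnique (Fin 1) ι))
  rwa [kronPow_one, tipP_submatrix_equiv] at h

lemma eval_tipP_vecMulVec (u : Fin n → ℝ) (v : ι → ℝ) :
    MvPolynomial.eval u (tipP (vecMulVec v v) G) = v ⬝ᵥ (evalMat u G *ᵥ v) := by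
  simp only [tipP, map_sum, map_mul, MvPolynomial.eval_C, vecMulVec_apply, evalMat, of_apply,
    dotProduct, mulVec, Finset.mul_sum]
  exact Finset.sum_congr rfl fun i _ => Finset.sum_congr rfl fun j _ => by ring

lemma posSemidef_evalMat_of_nonneg (hG : G.IsSymm) {u : Fin n → ℝ}
    (hu : ∀ p ∈ Hset G, 0 ≤ MvPolynomial.eval u p) : (evalMat u G).PosSemidef := by
  refine .of_dotProduct_mulVec_nonneg (isHermitian_iff_isSymm.2 (hG.map _)) fun v => ?_
  simpa [eval_tipP_vecMulVec] using hu _ (tipP_mem_Hset G (posSemidef_vecMulVec_self_star v))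

end Cone

theorem extreme_point_is_evaluation_general {n q : ℕ}
    (G : Matrix (Fin q) (Fin q) (MvPolynomial (Fin n) ℝ)) (hG : G.IsSymm)
    (halg : ∀ f : MvPolynomial (Fin n) ℝ, ∃ ε : ℝ, 0 < ε ∧
      ∀ lam : ℝ, |lam| < ε → 1 + MvPolynomial.C lam * f ∈ Hset G)
    (L : MvPolynomial (Fin n) ℝ →ₗ[ℝ] ℝ)
    (hL : L ∈ Set.extremePoints ℝ
      {L' : MvPolynomial (Fin n) ℝ →ₗ[ℝ] ℝ | L' 1 = 1 ∧ ∀ f ∈ Hset G, 0 ≤ L' f}) :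
    ∃ u : Fin n → ℝ, (evalMat u G).PosSemidef ∧
      ∀ f : MvPolynomial (Fin n) ℝ, L f = MvPolynomial.eval u f := by
  have hint : IsAlgebraicInteriorPoint (Hset G) 1 := fun f => by
    simpa only [MvPolynomial.smul_eq_C_mul] using halg f
  have hmul : ∀ a b, L (a * b) = L a * L b :=
    map_mul_of_mem_extremePoints_states hint (fun _ ha _ hb => mul_mem_Hset G ha hb) hL
  have heval := MvPolynomial.eq_eval_of_map_mul L hL.1.1 hmul
  exact ⟨_, posSemidef_evalMat_of_nonneg G hG fun p hp => heval p ▸ hL.1.2 p hp, heval⟩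

/-- Suppose `ℝ[x] = H(G) − H(G)` and `1` is an algebraic interior point of `H(G)`.
Then every extreme point `L` of the convex set `π(H(G))` of linear functionals with
`L(1) = 1` and `L ≥ 0` on `H(G)` is an evaluation functional at some point
`u ∈ K = {x : G(x) ⪰ 0}`. -/
theorem extreme_point_is_evaluation {n q : ℕ}
    (G : Matrix (Fin q) (Fin q) (MvPolynomial (Fin n) ℝ)) (hG : G.IsSymm)
    (hspan : ∀ p : MvPolynomial (Fin n) ℝ,
      ∃ h1 ∈ Hset G, ∃ h2 ∈ Hset G, p = h1 - h2)
    (halg : ∀ f : MvPolynomial (Fin n) ℝ, ∃ ε : ℝ, 0 < ε ∧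
      ∀ lam : ℝ, |lam| < ε → 1 + MvPolynomial.C lam * f ∈ Hset G)
    (L : MvPolynomial (Fin n) ℝ →ₗ[ℝ] ℝ)
    (hL : L ∈ Set.extremePoints ℝ
      {L' : MvPolynomial (Fin n) ℝ →ₗ[ℝ] ℝ | L' 1 = 1 ∧ ∀ f ∈ Hset G, 0 ≤ L' f}) :
    ∃ u : Fin n → ℝ, (evalMat u G).PosSemidef ∧
      ∀ f : MvPolynomial (Fin n) ℝ, L f = MvPolynomial.eval u f :=
  extreme_point_is_evaluation_general G hG halg L hL

end
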